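/- For a1 ∈ ℝ, the unique line through (0, a1) tangent to the graph of b'(x) = (1-4x)*sqrt(1-x)/(2*sqrt(x)) at a point x0 ∈ (0,1) has slope h(a1) = (1/27) * (4*a1^2 - 4*a1*sqrt(4*a1^2+9) - 9) * (2*a1 + sqrt(4*a1^2+9)), and the tangency point is x0 = 1/2 - a1/sqrt(9 + 4*a1^2). -/

import Mathlib

/-!
With `u = 1 - 2x` one has `4x(1 - x) = 1 - u²`, and the intercept `b'(x) - x b''(x)` of the
tangent line at `x` simplifies to `3u / (2√(1 - u²))`. So tangency with intercept `a₁` says that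
the point `(u, √(1 - u²))` of the upper unit semicircle lies on the line `3u = 2a₁ v`, which
singles out `u = 2a₁ / √(9 + 4a₁²)`. Evaluating `b''` there and using
`(r - 2a₁)(r + 2a₁) = 9` for `r = √(9 + 4a₁²)` gives the slope.
-/

open Real Set

noncomputable def bPrime (x : ℝ) : ℝ := (1 - 4 * x) * √(1 - x) / (2 * √x)

noncomputable def bDoublePrime (x : ℝ) : ℝ :=
  (8 * x ^ 2 - 4 * x - 1) / (4 * x ^ ((3 : ℝ) / 2) * √(1 - x))

lemma abs_div_sqrt_sq_add_sq_lt_one {c : ℝ} (hc : 0 < c) (b : ℝ) :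
    |b / √(c ^ 2 + b ^ 2)| < 1 := by
  have hR : 0 < √(c ^ 2 + b ^ 2) := by positivity
  rw [abs_div, abs_of_pos hR, div_lt_one hR, ← sqrt_sq_eq_abs]
  exact sqrt_lt_sqrt (sq_nonneg b) (by nlinarith)

lemma sqrt_one_sub_sq_div_sqrt_sq_add_sq {c : ℝ} (hc : 0 < c) (b : ℝ) :
    √(1 - (b / √(c ^ 2 + b ^ 2)) ^ 2) = c / √(c ^ 2 + b ^ 2) := by
  have hR : 0 < √(c ^ 2 + b ^ 2) := by positivity
  rw [sqrt_eq_iff_eq_sq _ (by positivity), div_pow, div_pow, sq_sqrt (by positivity)]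
  · field_simp
    ring
  · have := abs_div_sqrt_sq_add_sq_lt_one hc b
    rw [sub_nonneg, ← sq_abs]
    nlinarith [abs_nonneg (b / √(c ^ 2 + b ^ 2))]

lemma mul_eq_mul_sqrt_one_sub_sq_iff {c u : ℝ} (hc : 0 < c) (b : ℝ) (hu : |u| < 1) :
    c * u = b * √(1 - u ^ 2) ↔ u = b / √(c ^ 2 + b ^ 2) := by
  have hR : 0 < √(c ^ 2 + b ^ 2) := by positivity
  constructor
  · intro h
    have hu2 : 0 < 1 - u ^ 2 := by nlinarith [sq_abs u, abs_nonneg u]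
    set s := √(1 - u ^ 2)
    have hs : 0 < s := sqrt_pos.2 hu2
    have hs2 : s ^ 2 = 1 - u ^ 2 := sq_sqrt hu2.le
    have hR2 : √(c ^ 2 + b ^ 2) ^ 2 = c ^ 2 + b ^ 2 := sq_sqrt (by positivity)
    rw [eq_div_iff hR.ne']
    have hsq : (u * √(c ^ 2 + b ^ 2) - b) * (u * √(c ^ 2 + b ^ 2) + b) = 0 := by
      linear_combination (u ^ 2) * hR2 + (c * u + b * s) * h + b ^ 2 * hs2
    rcases mul_eq_zero.1 hsq with h' | h'
    · linarith
    · -- with `R = √(c² + b²)`, `u R = -b` turns `c u = b s` into `u (c + R s) = 0`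
      have hu0 : u * (c + √(c ^ 2 + b ^ 2) * s) = 0 := by
        linear_combination h + s * h'
      obtain rfl : u = 0 := (mul_eq_zero.1 hu0).resolve_right (by positivity)
      linarith
  · rintro rfl
    rw [sqrt_one_sub_sq_div_sqrt_sq_add_sq hc]
    ring

lemma two_mul_sqrt_mul_sqrt_one_sub {x : ℝ} (hx : 0 ≤ x) :
    2 * (√x * √(1 - x)) = √(1 - (1 - 2 * x) ^ 2) := by
  rw [show 1 - (1 - 2 * x) ^ 2 = 2 ^ 2 * (x * (1 - x)) by ring,
    sqrt_mul (by norm_num), sqrt_sq (by norm_num), sqrt_mul hx]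

lemma rpow_three_halves {x : ℝ} (hx : 0 ≤ x) : x ^ ((3 : ℝ) / 2) = x * √x := by
  rw [show (3 : ℝ) / 2 = 1 + 1 / 2 by norm_num, rpow_add' hx (by norm_num), rpow_one,
    sqrt_eq_rpow]

lemma bDoublePrime_eq {x : ℝ} (hx : 0 < x) :
    bDoublePrime x = (8 * x ^ 2 - 4 * x - 1) / (2 * x * √(1 - (1 - 2 * x) ^ 2)) := by
  rw [bDoublePrime, rpow_three_halves hx.le, ← two_mul_sqrt_mul_sqrt_one_sub hx.le]
  ring

lemma bPrime_sub_bDoublePrime_mul {x : ℝ} (hx : x ∈ Ioo 0 1) :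
    bPrime x - bDoublePrime x * x = 3 * (1 - 2 * x) / (2 * √(1 - (1 - 2 * x) ^ 2)) := by
  obtain ⟨hx0, hx1⟩ := hx
  have hs : 0 < √x := sqrt_pos.2 hx0
  have ht : 0 < √(1 - x) := sqrt_pos.2 (by linarith)
  have ht2 : √(1 - x) ^ 2 = 1 - x := sq_sqrt (by linarith)
  rw [bPrime, bDoublePrime, rpow_three_halves hx0.le, ← two_mul_sqrt_mul_sqrt_one_sub hx0.le]
  field_simp
  linear_combination (8 - 32 * x) * ht2

lemma three_sq_add_two_mul_sq (a : ℝ) : (3 : ℝ) ^ 2 + (2 * a) ^ 2 = 9 + 4 * a ^ 2 := by ring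

lemma half_sub_div_sqrt_mem_Ioo (a : ℝ) : 1 / 2 - a / √(9 + 4 * a ^ 2) ∈ Ioo 0 1 := by
  have h := abs_div_sqrt_sq_add_sq_lt_one three_pos (2 * a)
  rw [three_sq_add_two_mul_sq, mul_div_assoc, abs_lt] at h
  constructor <;> linarith [h.1, h.2]

lemma tangent_intercept_eq_iff {x : ℝ} (hx : x ∈ Ioo 0 1) (a : ℝ) :
    bPrime x - bDoublePrime x * x = a ↔ x = 1 / 2 - a / √(9 + 4 * a ^ 2) := by
  have hu : |1 - 2 * x| < 1 := abs_lt.2 ⟨by linarith [hx.2], by linarith [hx.1]⟩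
  have hpos : 0 < 2 * √(1 - (1 - 2 * x) ^ 2) := by
    have := sqrt_pos.2 (show 0 < 1 - (1 - 2 * x) ^ 2 by nlinarith [hx.1, hx.2])
    positivity
  rw [bPrime_sub_bDoublePrime_mul hx, div_eq_iff hpos.ne',
    show a * (2 * √(1 - (1 - 2 * x) ^ 2)) = 2 * a * √(1 - (1 - 2 * x) ^ 2) by ring,
    mul_eq_mul_sqrt_one_sub_sq_iff three_pos (2 * a) hu, three_sq_add_two_mul_sq, mul_div_assoc]
  constructor <;> intro h <;> linarith

lemma bDoublePrime_half_sub_div_sqrt (a : ℝ) :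
    bDoublePrime (1 / 2 - a / √(9 + 4 * a ^ 2)) =
      1 / 27 * (4 * a ^ 2 - 4 * a * √(9 + 4 * a ^ 2) - 9) * (2 * a + √(9 + 4 * a ^ 2)) := by
  have hx := half_sub_div_sqrt_mem_Ioo a
  have hroot := sqrt_one_sub_sq_div_sqrt_sq_add_sq three_pos (2 * a)
  rw [three_sq_add_two_mul_sq, mul_div_assoc] at hroot
  have hr2 : √(9 + 4 * a ^ 2) ^ 2 = 9 + 4 * a ^ 2 := sq_sqrt (by positivity)
  have hrpos : 0 < √(9 + 4 * a ^ 2) := by positivity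
  generalize √(9 + 4 * a ^ 2) = r at *
  rw [show 2 * (a / r) = 1 - 2 * (1 / 2 - a / r) by ring] at hroot
  have hden : 0 < r - 2 * a := by
    have := hx.1
    rw [sub_pos, div_lt_iff₀ hrpos] at this
    linarith
  rw [bDoublePrime_eq hx.1, hroot]
  field_simp
  linear_combination (48 * a * r - 48 * a ^ 2) * hr2

theorem stmt_5 (a1 : ℝ) (b' b'' : ℝ → ℝ)
    (hb' : ∀ x, b' x = (1 - 4 * x) * Real.sqrt (1 - x) / (2 * Real.sqrt x))
    (hb'' : ∀ x, b'' x =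
      (8 * x ^ 2 - 4 * x - 1) / (4 * x ^ ((3 : ℝ) / 2) * Real.sqrt (1 - x))) :
    (∃! x0 : ℝ, x0 ∈ Set.Ioo (0 : ℝ) 1 ∧ b' x0 - b'' x0 * x0 = a1) ∧
    (∀ x0 ∈ Set.Ioo (0 : ℝ) 1, b' x0 - b'' x0 * x0 = a1 →
      x0 = 1 / 2 - a1 / Real.sqrt (9 + 4 * a1 ^ 2) ∧
      b'' x0 = (1 / 27) * (4 * a1 ^ 2 - 4 * a1 * Real.sqrt (4 * a1 ^ 2 + 9) - 9) *
        (2 * a1 + Real.sqrt (4 * a1 ^ 2 + 9))) := by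
  obtain rfl : b' = bPrime := funext hb'
  obtain rfl : b'' = bDoublePrime := funext hb''
  have hx0 := half_sub_div_sqrt_mem_Ioo a1
  refine ⟨⟨_, ⟨hx0, (tangent_intercept_eq_iff hx0 a1).2 rfl⟩,
    fun x hx ↦ (tangent_intercept_eq_iff hx.1 a1).1 hx.2⟩, fun x hx h ↦ ?_⟩
  obtain rfl := (tangent_intercept_eq_iff hx a1).1 h
  rw [add_comm (4 * a1 ^ 2), bDoublePrime_half_sub_div_sqrt]
  exact ⟨rfl, rfl⟩
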